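/- Let Q be the n×n tridiagonal matrix with diagonal entries -v_1,...,-v_n (each v_i ≥ 2) and 1's on the super/sub-diagonals, and let y = (-v_1+2, -v_2+2, ..., -v_n+2). For every x ∈ ℝ^n with |x_i| ≤ |y_i| for all i and |x_{i₀}| < |y_{i₀}| for at least one i₀, one has xᵀQ^{-1}x > yᵀQ^{-1}y. -/

import Mathlib

open Matrix

/-- The tridiagonal matrix with diagonal entries `-v i` and `1`'s on the
super- and sub-diagonal. -/
def triQ {n : ℕ} (v : Fin n → ℤ) : Matrix (Fin n) (Fin n) ℝ :=
  Matrix.of fun i j =>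
    if i = j then -(v i : ℝ)
    else if (i : ℕ) + 1 = (j : ℕ) ∨ (j : ℕ) + 1 = (i : ℕ) then 1 else 0

/-!
`-Q` is the Laplacian of the path graph plus the diagonal matrix `diag(v i - deg i)`, whose
entries are nonnegative and positive at an end of the path; since the path is connected this
makes `-Q` positive definite. A positive definite matrix with nonpositive off-diagonal entries has
an entrywise nonnegative inverse (if `A u ≥ 0`, the negative part `w` of `u` satisfies
`wᵀ A w ≤ 0`, so `w = 0`). Hence `P = -Q⁻¹` is positive definite with nonnegative entries, and
`xᵀ P x ≤ |x|ᵀ P |x| < |y|ᵀ P |y| = yᵀ P y` because `|x| ≤ |y| = -y` with `|x| ≠ |y|`.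
-/

lemma posPart_mul_negPart {α : Type*} [Ring α] [LinearOrder α] [AddLeftMono α] (a : α) :
    a⁺ * a⁻ = 0 := by
  rcases le_total a 0 with h | h
  · rw [posPart_eq_zero.mpr h, zero_mul]
  · rw [negPart_eq_zero.mpr h, mul_zero]

namespace Matrix

variable {ι : Type*} [Fintype ι]

theorem PosDef.nonneg_of_nonneg_mulVec {A : Matrix ι ι ℝ} (hA : A.PosDef)
    (hoff : ∀ i j, i ≠ j → A i j ≤ 0) {u : ι → ℝ} (hu : 0 ≤ A *ᵥ u) : 0 ≤ u := by
  have hcross : u⁻ ⬝ᵥ A *ᵥ u⁺ ≤ 0 := by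
    simp only [dotProduct, mulVec, Finset.mul_sum]
    refine Finset.sum_nonpos fun i _ => Finset.sum_nonpos fun j _ => ?_
    rcases eq_or_ne i j with rfl | hij
    · rw [mul_left_comm, Pi.posPart_apply, Pi.negPart_apply, mul_comm (u i)⁻,
        posPart_mul_negPart, mul_zero]
    · exact mul_nonpos_of_nonneg_of_nonpos (negPart_nonneg _)
        (mul_nonpos_of_nonpos_of_nonneg (hoff i j hij) (posPart_nonneg _))
  have hneg : u⁻ ⬝ᵥ A *ᵥ u⁻ ≤ 0 := by
    have hsplit : u⁻ = u⁺ - u := by linear_combination -(posPart_sub_negPart u)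
    have := dotProduct_nonneg_of_nonneg (negPart_nonneg u) hu
    nth_rewrite 2 [hsplit]
    rw [mulVec_sub, dotProduct_sub]
    linarith
  have hzero : u⁻ = 0 := by
    by_contra hne
    have := hA.dotProduct_mulVec_pos hne
    rw [star_trivial] at this
    linarith
  exact negPart_eq_zero.mp hzero

theorem PosDef.inv_apply_nonneg [DecidableEq ι] {A : Matrix ι ι ℝ} (hA : A.PosDef)
    (hoff : ∀ i j, i ≠ j → A i j ≤ 0) (i j : ι) : 0 ≤ A⁻¹ i j := by
  have hcol : A *ᵥ (A⁻¹ *ᵥ Pi.single j 1) = Pi.single j 1 := by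
    rw [mulVec_mulVec, mul_nonsing_inv _ ((isUnit_iff_isUnit_det A).mp hA.isUnit), one_mulVec]
  have := hA.nonneg_of_nonneg_mulVec hoff (hcol ▸ Pi.single_nonneg.mpr zero_le_one) i
  rwa [mulVec_single_one] at this

lemma dotProduct_mulVec_le_abs {P : Matrix ι ι ℝ} (hP : ∀ i j, 0 ≤ P i j) (x : ι → ℝ) :
    x ⬝ᵥ P *ᵥ x ≤ |x| ⬝ᵥ P *ᵥ |x| := by
  simp only [dotProduct, mulVec, Finset.mul_sum, Pi.abs_apply]
  refine Finset.sum_le_sum fun i _ => Finset.sum_le_sum fun j _ => ?_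
  calc x i * (P i j * x j) ≤ |x i * (P i j * x j)| := le_abs_self _
    _ = |x i| * (P i j * |x j|) := by rw [abs_mul, abs_mul, abs_of_nonneg (hP i j)]

lemma dotProduct_mulVec_nonneg_of_nonneg {P : Matrix ι ι ℝ} (hP : ∀ i j, 0 ≤ P i j)
    {a b : ι → ℝ} (ha : 0 ≤ a) (hb : 0 ≤ b) : 0 ≤ a ⬝ᵥ P *ᵥ b :=
  dotProduct_nonneg_of_nonneg ha fun i =>
    Finset.sum_nonneg fun j _ => mul_nonneg (hP i j) (hb j)

lemma PosDef.dotProduct_mulVec_lt_of_le_of_ne {P : Matrix ι ι ℝ} (hPd : P.PosDef)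
    (hP : ∀ i j, 0 ≤ P i j) {a b : ι → ℝ} (ha : 0 ≤ a) (hab : a ≤ b) (hne : a ≠ b) :
    a ⬝ᵥ P *ᵥ a < b ⬝ᵥ P *ᵥ b := by
  obtain ⟨d, hd, rfl⟩ : ∃ d, 0 ≤ d ∧ b = a + d := ⟨b - a, sub_nonneg.mpr hab, by abel⟩
  have hdd := hPd.dotProduct_mulVec_pos fun h : d = 0 => hne (by rw [h, add_zero])
  rw [star_trivial] at hdd
  have had := dotProduct_mulVec_nonneg_of_nonneg hP ha hd
  have hda := dotProduct_mulVec_nonneg_of_nonneg hP hd ha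
  rw [mulVec_add, dotProduct_add, add_dotProduct, add_dotProduct]
  linarith

end Matrix

namespace SimpleGraph

theorem posDef_lapMatrix_add_diagonal {V : Type*} [Fintype V] [DecidableEq V]
    (G : SimpleGraph V) [DecidableRel G.Adj] (hG : G.Preconnected) {d : V → ℝ} (hd : 0 ≤ d)
    {k : V} (hk : 0 < d k) : (G.lapMatrix ℝ + diagonal d).PosDef := by
  refine .of_dotProduct_mulVec_pos ((G.isHermitian_lapMatrix ℝ).add
    (PosSemidef.diagonal hd).isHermitian) fun x hx => ?_
  rw [star_trivial, add_mulVec, dotProduct_add]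
  have hL : 0 ≤ x ⬝ᵥ G.lapMatrix ℝ *ᵥ x := by
    simpa using (posSemidef_lapMatrix ℝ G).dotProduct_mulVec_nonneg x
  have hD : 0 ≤ x ⬝ᵥ diagonal d *ᵥ x := by
    simpa using (PosSemidef.diagonal hd).dotProduct_mulVec_nonneg x
  refine lt_of_le_of_ne (add_nonneg hL hD) fun h => hx ?_
  have hL0 : x ⬝ᵥ G.lapMatrix ℝ *ᵥ x = 0 := by linarith
  have hD0 : x ⬝ᵥ diagonal d *ᵥ x = 0 := by linarith
  have hconst : ∀ i, x i = x k := fun i =>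
    (G.lapMatrix_toLinearMap₂'_apply'_eq_zero_iff_forall_reachable x).mp
      (by rwa [toLinearMap₂'_apply']) i k (hG i k)
  have hxk : x k = 0 := by
    simp only [dotProduct, mulVec_diagonal, mul_left_comm (x _)] at hD0
    have hterm := (Finset.sum_eq_zero_iff_of_nonneg fun i _ =>
      mul_nonneg (hd i) (mul_self_nonneg (x i))).mp hD0 k (Finset.mem_univ k)
    simpa [hk.ne'] using hterm
  funext i
  rw [hconst i, hxk, Pi.zero_apply]

instance decidableRelPathGraphAdj (n : ℕ) : DecidableRel (pathGraph n).Adj :=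
  fun _ _ => decidable_of_iff' _ pathGraph_adj

theorem pathGraph_degree_le_two {n : ℕ} (i : Fin n) : (pathGraph n).degree i ≤ 2 := by
  rw [← card_neighborFinset_eq_degree]
  refine (Finset.card_le_card_of_injOn Fin.val (t := {(i : ℕ) - 1, (i : ℕ) + 1}) ?_
    Fin.val_injective.injOn).trans Finset.card_le_two
  intro j hj
  simp only [Finset.coe_insert, Finset.coe_singleton, Set.mem_insert_iff, Set.mem_singleton_iff]
  have := pathGraph_adj.mp ((mem_neighborFinset _ _ _).mp hj)
  omega

theorem pathGraph_degree_zero_le_one {n : ℕ} [NeZero n] : (pathGraph n).degree 0 ≤ 1 := by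
  rw [← card_neighborFinset_eq_degree]
  refine (Finset.card_le_card_of_injOn Fin.val (t := {1}) ?_
    Fin.val_injective.injOn).trans (Finset.card_singleton 1).le
  intro j hj
  have := pathGraph_adj.mp ((mem_neighborFinset _ _ _).mp hj)
  simp only [Fin.val_zero] at this
  simp only [Finset.coe_singleton, Set.mem_singleton_iff]
  omega

end SimpleGraph

open SimpleGraph

section triQ

variable {n : ℕ} (v : Fin n → ℤ)

theorem neg_triQ_eq_lapMatrix_add_diagonal :
    -triQ v = (pathGraph n).lapMatrix ℝ +
      diagonal fun i => (v i : ℝ) - (pathGraph n).degree i := by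
  ext i j
  by_cases hij : i = j
  · subst hij; simp [triQ, lapMatrix, degMatrix]
  · simp [triQ, lapMatrix, degMatrix, hij, pathGraph_adj, adjMatrix_apply]

theorem neg_triQ_apply_nonpos {i j : Fin n} (hij : i ≠ j) : (-triQ v) i j ≤ 0 := by
  rw [Matrix.neg_apply, triQ, of_apply, if_neg hij]
  split_ifs <;> norm_num

theorem posDef_neg_triQ [NeZero n] (hv : ∀ i, 2 ≤ v i) : (-triQ v).PosDef := by
  have hv' : ∀ i, (2 : ℝ) ≤ v i := fun i => by exact_mod_cast hv i
  rw [neg_triQ_eq_lapMatrix_add_diagonal]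
  refine (pathGraph n).posDef_lapMatrix_add_diagonal (pathGraph_preconnected n) (k := 0)
    (fun i => ?_) ?_
  · have : ((pathGraph n).degree i : ℝ) ≤ 2 := by exact_mod_cast pathGraph_degree_le_two i
    simp only [Pi.zero_apply]
    linarith [hv' i]
  · have : ((pathGraph n).degree 0 : ℝ) ≤ 1 := by exact_mod_cast pathGraph_degree_zero_le_one
    linarith [hv' 0]

end triQ

theorem stmt6 {n : ℕ} (v : Fin n → ℤ) (hv : ∀ i, 2 ≤ v i)
    (y : Fin n → ℝ) (hy : ∀ i, y i = -(v i : ℝ) + 2)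
    (x : Fin n → ℝ) (hbox : ∀ i, |x i| ≤ |y i|)
    (i₀ : Fin n) (hstrict : |x i₀| < |y i₀|) :
    x ⬝ᵥ (triQ v)⁻¹.mulVec x > y ⬝ᵥ (triQ v)⁻¹.mulVec y := by
  have : NeZero n := NeZero.of_pos i₀.pos
  have hA := posDef_neg_triQ v hv
  have hP : ∀ i j, 0 ≤ (-triQ v)⁻¹ i j := hA.inv_apply_nonneg fun _ _ => neg_triQ_apply_nonpos v
  have hinv : (triQ v)⁻¹ = -(-triQ v)⁻¹ := inv_eq_left_inv <| by
    rw [neg_mul, ← mul_neg, nonsing_inv_mul _ ((isUnit_iff_isUnit_det _).mp hA.isUnit)]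
  have habs_y : |y| = -y := funext fun i => abs_of_nonpos <| by
    have : (2 : ℝ) ≤ v i := by exact_mod_cast hv i
    linarith [hy i]
  have key : x ⬝ᵥ (-triQ v)⁻¹ *ᵥ x < y ⬝ᵥ (-triQ v)⁻¹ *ᵥ y :=
    calc x ⬝ᵥ (-triQ v)⁻¹ *ᵥ x ≤ |x| ⬝ᵥ (-triQ v)⁻¹ *ᵥ |x| := dotProduct_mulVec_le_abs hP x
      _ < |y| ⬝ᵥ (-triQ v)⁻¹ *ᵥ |y| :=
        hA.inv.dotProduct_mulVec_lt_of_le_of_ne hP (abs_nonneg x) hbox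
          fun h => hstrict.ne (congrFun h i₀)
      _ = y ⬝ᵥ (-triQ v)⁻¹ *ᵥ y := by
        rw [habs_y, mulVec_neg, dotProduct_neg, neg_dotProduct, neg_neg]
  rw [hinv, neg_mulVec, neg_mulVec, dotProduct_neg, dotProduct_neg]
  exact neg_lt_neg key
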